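/- arXiv:2404.03935 — 7 statements merged into one kernel-verified Lean document; each statement's English description precedes it below -/
import Mathlib

section
/- Let f: ℤ → ℤ be a bijection satisfying f(i+n) = f(i) + n for all i, f(i) > i for all i, and ∑_{i=1}^n (f(i) - i) = kn. Then the cyclic group generated by f acting on ℤ has exactly k orbits. -/
/-!
Since `f i > i`, every orbit of `⟨f⟩` is a strictly increasing bi-infinite sequence, so it jumps
over the cut between `0` and `1` exactly once: orbits correspond to the crossings
`i ≤ 0 < f i`. Writing a crossing as `i = r - t * n` with `1 ≤ r ≤ n`, periodicity turns
`0 < f i` into `t * n < f r`, so the class of `r` contains `(f r - 1) / n` crossings. As `f`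
permutes the residues mod `n`, the remainders of the `f r - 1` are those of the `r - 1`, whence
`n * ∑ r, (f r - 1) / n = ∑ r, (f r - r) = k * n`.
-/

open Finset

theorem StrictMono.apply_add_sub_le {g : ℤ → ℤ} (hg : StrictMono g) {a b : ℤ} (hab : a ≤ b) :
    g a + (b - a) ≤ g b := by
  induction b, hab using Int.leInduction with
  | base => simp
  | succ b _ ih => have := hg (lt_add_one b); omega

theorem StrictMono.exists_apply_le_and_lt_apply_add_one {g : ℤ → ℤ} (hg : StrictMono g)
    (c : ℤ) : ∃ d, g d ≤ c ∧ c < g (d + 1) := by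
  have hbdd : ∃ b, ∀ d, c < g d → b ≤ d := by
    refine ⟨min 0 (c - g 0), fun d hd => ?_⟩
    by_contra! h
    have := hg.apply_add_sub_le (a := d) (b := 0) (by omega)
    omega
  have hinh : ∃ d, c < g d := by
    refine ⟨max 0 (c - g 0 + 1), ?_⟩
    have := hg.apply_add_sub_le (a := 0) (b := max 0 (c - g 0 + 1)) (le_max_left _ _)
    omega
  obtain ⟨d, hd, hleast⟩ := Int.exists_least_of_bdd hbdd hinh
  refine ⟨d - 1, ?_, by rwa [sub_add_cancel]⟩
  by_contra! h
  have := hleast _ h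
  omega

theorem MulAction.orbitRel_zpowers_iff {α : Type*} (f : Equiv.Perm α) (x y : α) :
    orbitRel (Subgroup.zpowers f) α x y ↔ ∃ d : ℤ, (f ^ d) y = x := by
  rw [orbitRel_apply, mem_orbit_iff]
  exact ⟨fun ⟨⟨_, d, rfl⟩, h⟩ => ⟨d, h⟩, fun ⟨d, h⟩ => ⟨⟨_, d, rfl⟩, h⟩⟩

theorem Int.eq_and_eq_of_sub_mul_eq_sub_mul {n r r' t t' : ℤ} (hr : r ∈ Icc 1 n)
    (hr' : r' ∈ Icc 1 n) (h : r - t * n = r' - t' * n) : r = r' ∧ t = t' := by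
  rw [mem_Icc] at hr hr'
  rcases lt_trichotomy t t' with htt | rfl | htt
  · nlinarith
  · omega
  · nlinarith

namespace AffinePermutation

def crossings (f : Equiv.Perm ℤ) : Set ℤ := {i | i ≤ 0 ∧ 0 < f i}

section Orbits

open MulAction

variable {f : Equiv.Perm ℤ}

theorem strictMono_zpow_apply (hpos : ∀ i, i < f i) (x : ℤ) :
    StrictMono fun d : ℤ => (f ^ d) x :=
  strictMono_int_of_lt_succ fun d => by
    simpa only [add_comm d, zpow_one_add, Equiv.Perm.mul_apply] using hpos _

theorem nonpos_of_zpow_apply_mem_crossings (hpos : ∀ i, i < f i) {s t d : ℤ}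
    (hs : s ∈ crossings f) (ht : t ∈ crossings f) (h : (f ^ d) t = s) : d ≤ 0 := by
  by_contra! hd
  have := (strictMono_zpow_apply hpos t).monotone (show (1 : ℤ) ≤ d by omega)
  simp only [zpow_one, h] at this
  exact absurd (ht.2.trans_le this) hs.1.not_gt

theorem exists_zpow_apply_mem_crossings (hpos : ∀ i, i < f i) (x : ℤ) :
    ∃ d : ℤ, (f ^ d) x ∈ crossings f := by
  obtain ⟨d, hd, hd'⟩ := (strictMono_zpow_apply hpos x).exists_apply_le_and_lt_apply_add_one 0
  refine ⟨d, hd, ?_⟩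
  simpa only [add_comm d, zpow_one_add, Equiv.Perm.mul_apply] using hd'

theorem card_orbitRel_quotient_zpowers (hpos : ∀ i, i < f i) :
    Nat.card (orbitRel.Quotient (Subgroup.zpowers f) ℤ) = Nat.card (crossings f) := by
  symm
  refine Nat.card_congr (Equiv.ofBijective (fun s => ⟦(s : ℤ)⟧) ⟨?_, ?_⟩)
  · rintro ⟨s, hs⟩ ⟨t, ht⟩ hst
    obtain ⟨d, hd⟩ := (orbitRel_zpowers_iff f s t).mp (Quotient.exact hst)
    have hd' : (f ^ (-d)) s = t := by rw [← hd, ← Equiv.Perm.mul_apply, ← zpow_add]; simp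
    obtain rfl : d = 0 := le_antisymm (nonpos_of_zpow_apply_mem_crossings hpos hs ht hd)
      (neg_nonpos.mp (nonpos_of_zpow_apply_mem_crossings hpos ht hs hd'))
    simpa using hd.symm
  · rintro ⟨x⟩
    obtain ⟨d, hd⟩ := exists_zpow_apply_mem_crossings hpos x
    exact ⟨⟨_, hd⟩, Quotient.sound ((orbitRel_zpowers_iff f _ x).mpr ⟨d, rfl⟩)⟩

end Orbits

section Periodic

variable {n : ℤ} {f : Equiv.Perm ℤ}

theorem apply_add_mul_of_periodic (hper : ∀ i, f (i + n) = f i + n) (c i : ℤ) :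
    f (i + c * n) = f i + c * n := by
  induction c using Int.induction_on generalizing i with
  | zero => simp
  | succ c ih => rw [add_one_mul, ← add_assoc, hper, ih, add_assoc]
  | pred c ih =>
    have hprev := hper (i - n)
    rw [sub_add_cancel] at hprev
    rw [show i + (-c - 1) * n = i - n + -c * n by ring, ih]
    linarith

theorem apply_sub_mul_of_periodic (hper : ∀ i, f (i + n) = f i + n) (c i : ℤ) :
    f (i - c * n) = f i - c * n := by
  simpa [neg_mul, ← sub_eq_add_neg] using apply_add_mul_of_periodic hper (-c) i

theorem injOn_emod_of_periodic (hper : ∀ i, f (i + n) = f i + n) :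
    Set.InjOn (fun r => (f r - 1) % n) (Icc 1 n) := by
  intro r hr r' hr' h
  obtain ⟨c, hc⟩ := Int.ModEq.dvd h
  have : f (r + c * n) = f r' := by
    rw [apply_add_mul_of_periodic hper]; linarith
  exact (Int.eq_and_eq_of_sub_mul_eq_sub_mul hr hr' (t := -c) (t' := 0)
    (by linarith [f.injective this])).1

theorem image_emod_of_periodic (hn : 0 < n) (hper : ∀ i, f (i + n) = f i + n) :
    (Icc 1 n).image (fun r => (f r - 1) % n) = Ico 0 n := by
  refine eq_of_subset_of_card_le (fun x hx => ?_) ?_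
  · obtain ⟨r, -, rfl⟩ := mem_image.mp hx
    exact mem_Ico.mpr ⟨Int.emod_nonneg _ hn.ne', Int.emod_lt_of_pos _ hn⟩
  · rw [card_image_of_injOn (injOn_emod_of_periodic hper), Int.card_Icc, Int.card_Ico]
    omega

theorem sum_emod_of_periodic (hn : 0 < n) (hper : ∀ i, f (i + n) = f i + n) :
    ∑ r ∈ Icc 1 n, (f r - 1) % n = ∑ x ∈ Ico 0 n, x := by
  rw [← image_emod_of_periodic hn hper, sum_image (injOn_emod_of_periodic hper)]

theorem sum_ediv_of_periodic {k : ℤ} (hn : 0 < n) (hper : ∀ i, f (i + n) = f i + n)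
    (hsum : ∑ i ∈ Icc 1 n, (f i - i) = k * n) :
    ∑ r ∈ Icc 1 n, (f r - 1) / n = k := by
  have hid : ∀ i, (1 : Equiv.Perm ℤ) (i + n) = (1 : Equiv.Perm ℤ) i + n := fun _ => rfl
  refine mul_right_cancel₀ hn.ne' ?_
  calc (∑ r ∈ Icc 1 n, (f r - 1) / n) * n
      = ∑ r ∈ Icc 1 n, (f r - 1) - ∑ r ∈ Icc 1 n, (f r - 1) % n := by
        rw [sum_mul, eq_sub_iff_add_eq, ← sum_add_distrib]
        exact sum_congr rfl fun r _ => Int.ediv_mul_add_emod _ _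
    _ = ∑ r ∈ Icc 1 n, (f r - 1) - ∑ r ∈ Icc 1 n, (r - 1) := by
        rw [sum_emod_of_periodic hn hper, ← sum_emod_of_periodic hn hid]
        refine congrArg _ (sum_congr rfl fun r hr => ?_)
        rw [mem_Icc] at hr
        rw [Equiv.Perm.one_apply]
        exact Int.emod_eq_of_lt (by omega) (by omega)
    _ = k * n := by
        rw [← sum_sub_distrib, ← hsum]
        exact sum_congr rfl fun r _ => by ring

theorem crossings_eq_image (hn : 0 < n) (hper : ∀ i, f (i + n) = f i + n) :
    crossings f = ((Icc 1 n).sigma fun r => Icc 1 ((f r - 1) / n)).image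
      fun p => p.1 - p.2 * n := by
  ext i
  simp only [crossings, Set.mem_ofPred_eq, coe_image, coe_sigma, Set.mem_image,
    Set.mem_sigma_iff, mem_coe, mem_Icc, Sigma.exists]
  constructor
  · rintro ⟨hi, hfi⟩
    have hdiv := Int.ediv_mul_add_emod (i - 1) n
    have hrem := Int.emod_nonneg (i - 1) hn.ne'
    have hrem' := Int.emod_lt_of_pos (i - 1) hn
    have hq : (i - 1) / n < 0 := Int.ediv_neg_of_neg_of_pos (by omega) hn
    have hf := apply_sub_mul_of_periodic hper (-((i - 1) / n)) ((i - 1) % n + 1)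
    rw [show (i - 1) % n + 1 - -((i - 1) / n) * n = i by linarith] at hf
    refine ⟨(i - 1) % n + 1, -((i - 1) / n), ⟨⟨by omega, by omega⟩, by omega, ?_⟩, by linarith⟩
    rw [Int.le_ediv_iff_mul_le hn]
    linarith
  · rintro ⟨r, t, ⟨⟨hr1, hrn⟩, ht1, htq⟩, rfl⟩
    rw [Int.le_ediv_iff_mul_le hn] at htq
    rw [apply_sub_mul_of_periodic hper]
    constructor
    · nlinarith
    · omega

theorem card_crossings (hn : 0 < n) (hper : ∀ i, f (i + n) = f i + n) (hpos : ∀ i, i < f i) :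
    (Nat.card (crossings f) : ℤ) = ∑ r ∈ Icc 1 n, (f r - 1) / n := by
  rw [crossings_eq_image hn hper, Nat.card_coe_set_eq, Set.ncard_coe_finset,
    card_image_of_injOn, card_sigma, Nat.cast_sum]
  · refine sum_congr rfl fun r hr => ?_
    have := hpos r
    rw [mem_Icc] at hr
    rw [Int.card_Icc, add_sub_cancel_right,
      Int.toNat_of_nonneg (Int.ediv_nonneg (by omega) hn.le)]
  · rintro ⟨r, t⟩ hrt ⟨r', t'⟩ hrt' h
    simp only [coe_sigma, Set.mem_sigma_iff, mem_coe] at hrt hrt'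
    obtain ⟨rfl, rfl⟩ := Int.eq_and_eq_of_sub_mul_eq_sub_mul hrt.1 hrt'.1 h
    rfl

end Periodic

end AffinePermutation

/-- An affine permutation `f` of period `n` with `f i > i` for all `i`
and `∑_{i=1}^n (f i - i) = k * n` generates a cyclic group whose action on `ℤ`
has exactly `k` orbits. -/
theorem affine_permutation_orbit_count (n k : ℤ) (hk : 0 < k) (hkn : k < n)
    (f : Equiv.Perm ℤ)
    (hper : ∀ i : ℤ, f (i + n) = f i + n)
    (hpos : ∀ i : ℤ, i < f i)
    (hsum : ∑ i ∈ Finset.Icc (1 : ℤ) n, (f i - i) = k * n) :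
    Nat.card (MulAction.orbitRel.Quotient (Subgroup.zpowers f) ℤ) = k := by
  have hn : 0 < n := hk.trans hkn
  rw [AffinePermutation.card_orbitRel_quotient_zpowers hpos,
    AffinePermutation.card_crossings hn hper hpos,
    AffinePermutation.sum_ediv_of_periodic hn hper hsum]
end

section
/- Let f: ℤ → ℤ be an affine permutation of period n (i.e., a bijection with f(i+n)=f(i)+n for all i), and let α ⊆ ℤ be an orbit of the cyclic group generated by f. Write α as an increasing sequence (..., α_{i-1} < α_i < α_{i+1}, ...), and let m be the number of residues modulo n occurring in α. Then for every i, n divides α_{i+m} - α_i, and the quotient (α_{i+m} - α_i)/n is independent of i. -/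
/-!
Translation by `n` commutes with `f`, so whenever two points of the orbit differ by a multiple
`k * n`, the whole orbit is invariant under translation by `k * n`; its increasing enumeration
then satisfies `α (i + t) = α i + k * n` for a fixed index shift `t`. The shifts `t` arising
this way form a subgroup `a ℤ` of `ℤ`, and `α i ≡ α j [ZMOD n]` exactly when `a ∣ j - i`.
Hence the orbit meets exactly `|a|` residues, and `m = |a|` is itself such a shift.
(If `a = 0` the orbit meets infinitely many residues of `ZMod n.toNat`, `Nat.card` gives `m = 0`,
and the statement holds trivially.)
-/

open Function Set

namespace Equiv.Perm

variable {X : Type*} {f τ : Perm X} {x y z : X}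

theorem SameCycle.map_of_commute (hτ : Commute f τ) (h : SameCycle f x y) :
    SameCycle f (τ x) (τ y) := by
  simpa [hτ.symm.eq] using h.conj (g := τ)

theorem sameCycle_apply_right_iff_of_commute (hτ : Commute f τ) (hy : SameCycle f x y)
    (hτy : SameCycle f x (τ y)) : SameCycle f x (τ z) ↔ SameCycle f x z := by
  constructor
  · intro h
    have hyz := (hτy.symm.trans h).map_of_commute hτ.inv_right
    simp only [coe_inv, symm_apply_apply] at hyz
    exact hy.trans hyz
  · intro h
    exact hτy.trans ((hy.symm.trans h).map_of_commute hτ)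

end Equiv.Perm

theorem Equiv.Perm.commute_addRight_zsmul {n : ℤ} {f : Perm ℤ}
    (hper : ∀ i, f (i + n) = f i + n) (k : ℤ) : Commute f (Equiv.addRight (k • n)) := by
  rw [← Equiv.zsmul_addRight]
  exact Commute.zpow_right (Equiv.ext hper) k

theorem Int.apply_eq_apply_zero_add_of_strictMono {g : ℤ → ℤ} (hg : StrictMono g)
    (hs : Surjective g) (i : ℤ) : g i = g 0 + i := by
  have hsucc (i : ℤ) : g (i + 1) = g i + 1 := by
    simpa [Order.succ_eq_add_one] using (hg.orderIsoOfSurjective g hs).map_succ i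
  induction i using Int.induction_on with
  | zero => simp
  | succ k ih => rw [hsucc, ih, add_assoc]
  | pred k ih =>
    have h := hsucc (-k - 1)
    rw [sub_add_cancel, ih] at h
    linarith

theorem StrictMono.exists_add_eq_add_of_add_mem_range_iff {β : Type*} [AddCommGroup β]
    [LinearOrder β] [IsOrderedAddMonoid β] {α : ℤ → β} (hα : StrictMono α) {p : β}
    (hp : ∀ z, z + p ∈ range α ↔ z ∈ range α) : ∃ t, ∀ i, α (i + t) = α i + p := by
  choose g hg using fun i => (hp (α i)).2 ⟨i, rfl⟩
  have hg_mono : StrictMono g := fun i j hij => hα.lt_iff_lt.1 <| by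
    simpa [hg] using hα hij
  have hg_surj : Surjective g := fun j => by
    obtain ⟨i, hi⟩ := (hp (α j - p)).1 ⟨j, by rw [sub_add_cancel]⟩
    exact ⟨i, hα.injective (by rw [hg, hi, sub_add_cancel])⟩
  refine ⟨g 0, fun i => ?_⟩
  rw [add_comm, ← Int.apply_eq_apply_zero_add_of_strictMono hg_mono hg_surj, hg]

def shiftPeriods (α : ℤ → ℤ) (n : ℤ) : AddSubgroup ℤ where
  carrier := {t | ∃ c : ℤ, ∀ i, α (i + t) = α i + c * n}
  zero_mem' := ⟨0, by simp⟩
  add_mem' := by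
    rintro a b ⟨c, hc⟩ ⟨d, hd⟩
    exact ⟨c + d, fun i => by rw [← add_assoc, hd, hc]; ring⟩
  neg_mem' := by
    rintro t ⟨c, hc⟩
    refine ⟨-c, fun i => ?_⟩
    have h := hc (i + -t)
    rw [neg_add_cancel_right] at h
    linarith

theorem sub_mem_shiftPeriods_iff {n : ℤ} {f : Equiv.Perm ℤ} (hper : ∀ i, f (i + n) = f i + n)
    {α : ℤ → ℤ} (hα : StrictMono α) {x : ℤ} (horb : ∀ y, y ∈ range α ↔ f.SameCycle x y)
    (i j : ℤ) : j - i ∈ shiftPeriods α n ↔ n ∣ α j - α i := by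
  constructor
  · rintro ⟨c, hc⟩
    have hj := hc i
    rw [add_sub_cancel] at hj
    exact ⟨c, by rw [hj]; ring⟩
  · rintro ⟨k, hk⟩
    have hinv (z : ℤ) : z + k * n ∈ range α ↔ z ∈ range α := by
      rw [horb, horb]
      refine Equiv.Perm.sameCycle_apply_right_iff_of_commute
        (Equiv.Perm.commute_addRight_zsmul hper k) ((horb _).1 ⟨i, rfl⟩) ((horb _).1 ⟨j, ?_⟩)
      simp only [Equiv.coe_addRight, smul_eq_mul]
      linarith
    obtain ⟨t, ht⟩ := hα.exists_add_eq_add_of_add_mem_range_iff hinv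
    have hij : i + t = j := hα.injective (by rw [ht]; linarith)
    exact ⟨k, by rwa [← hij, add_sub_cancel_left]⟩

theorem Nat.card_range_eq_of_apply_eq_iff {ι β γ : Type*} {r : ι → β} {s : ι → γ}
    (h : ∀ i j, r i = r j ↔ s i = s j) : Nat.card (range r) = Nat.card (range s) :=
  Nat.card_congr <| (Setoid.quotientKerEquivRange r).symm.trans <|
    (Quotient.congrRight h).trans (Setoid.quotientKerEquivRange s)

theorem Int.card_range_eq_of_apply_eq_iff_dvd {β : Type*} {r : ℤ → β} {t : ℕ}
    (h : ∀ i j, r i = r j ↔ (t : ℤ) ∣ j - i) : Nat.card (Set.range r) = t := by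
  rw [Nat.card_range_eq_of_apply_eq_iff (s := ((↑) : ℤ → ZMod t)) fun i j => by
      rw [h, ZMod.intCast_eq_intCast_iff_dvd_sub],
    ZMod.intCast_surjective.range_eq, Nat.card_univ, Nat.card_zmod]

/-- Let `f` be an affine permutation of period `n` and `α : ℤ → ℤ` a strictly
increasing enumeration of an orbit of the cyclic group generated by `f`. If `m` is the number
of residues modulo `n` occurring in the orbit, then `n ∣ α (i + m) - α i` for every `i`,
and the quotient is independent of `i`. -/
theorem orbit_period_lemma (n : ℤ) (hn : 0 < n) (f : Equiv.Perm ℤ)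
    (hper : ∀ i : ℤ, f (i + n) = f i + n)
    (α : ℤ → ℤ) (hmono : StrictMono α)
    (horb : Set.range α = {y : ℤ | ∃ d : ℤ, (f ^ d) (α 0) = y})
    (m : ℕ)
    (hm : m = Nat.card ((fun x : ℤ => (x : ZMod n.toNat)) '' Set.range α)) :
    (∀ i : ℤ, n ∣ α (i + m) - α i) ∧
    (∀ i i' : ℤ, α (i + m) - α i = α (i' + m) - α i') := by
  obtain ⟨a, ha⟩ := Int.subgroup_cyclic (shiftPeriods α n)
  rw [← AddSubgroup.zmultiples_eq_closure] at ha
  have hresidue (i j : ℤ) : (α i : ZMod n.toNat) = α j ↔ (a.natAbs : ℤ) ∣ j - i := by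
    rw [ZMod.intCast_eq_intCast_iff_dvd_sub, Int.toNat_of_nonneg hn.le, Int.natAbs_dvd,
      ← Int.mem_zmultiples_iff (a := a), ← ha,
      sub_mem_shiftPeriods_iff hper hmono (Set.ext_iff.1 horb)]
  have hma : m = a.natAbs := by
    rw [hm, ← Set.range_comp]
    exact Int.card_range_eq_of_apply_eq_iff_dvd hresidue
  obtain ⟨c, hc⟩ : (m : ℤ) ∈ shiftPeriods α n := by
    rw [ha, hma, Int.mem_zmultiples_iff]
    exact Int.dvd_natAbs_self
  exact ⟨fun i => ⟨c, by rw [hc]; ring⟩, fun i i' => by rw [hc, hc]; ring⟩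
end

section
/- Let A = [v_1, ..., v_{hn}] be a (k+1) × (hn) matrix whose columns are standard basis vectors of ℂ^{k+1}, all of whose rows are nonzero, and which has the property that cyclically shifting the columns by n (sending (v_1,...,v_{hn}) to (v_{n+1},...,v_{hn},v_1,...,v_n)) differs from A by a permutation of the rows. Extend A periodically to a (k+1)×∞ matrix with period hn in the columns. Define f_A: ℤ → ℤ by f_A(i) = min{ j ≥ i : v_j = v_{i-1} }. Then f_A is a bijection, f_A(i+n) = f_A(i) + n for all i, f_A(i) ≥ i for all i, and ∑_{i=1}^n (f_A(i) - i) = kn. -/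
open Finset Function

/-! `f` sends `i` to the next occurrence of the letter at `i - 1`. It is injective since two
positions carrying the same letter have distinct next occurrences, surjective since every
position is the next occurrence of the previous occurrence of its letter, and it commutes with
the shift by `n` because that shift permutes the letters.

For the sum, count the pairs `i ≤ j < f i` up to the diagonal shift by `n`: normalizing `i` into
`[1, n]` gives `∑ (f i - i)`, normalizing `j` gives `∑ #{i | i ≤ j < f i}`. For fixed `j`, the
map `i ↦ (letter at i - 1)` is a bijection from these `i` onto the letters other than the one
at `j` (its inverse sends a letter to one plus its last occurrence before `j`), so each count
is `k`. -/

theorem Pi.single_left_injective {ι M : Type*} [DecidableEq ι] [Zero M] {x : M} (hx : x ≠ 0) :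
    Injective fun i : ι => Pi.single i x := by
  intro a b hab
  by_contra hne
  simpa [hne, hx] using congrFun hab a

section DoubleCounting

variable {f : ℤ → ℤ} {n : ℕ} {N : ℤ}

theorem sum_sub_eq_sum_card_crossing (hn : 0 < n) (hadd : ∀ i, f (i + n) = f i + n)
    (hle : ∀ i, i ≤ f i) (hlt : ∀ i, f i < i + N) :
    ∑ i ∈ Icc (1 : ℤ) n, (f i - i) = ∑ j ∈ Icc (1 : ℤ) n, (#{i ∈ Ioc (j - N) j | j < f i} : ℤ) := by
  have hp : (0 : ℤ) < n := by exact_mod_cast hn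
  have hper : Periodic (fun i => f i - i) n := fun i => by simp only [hadd]; ring
  have hsub : ∀ i (m : ℤ), f (i - m * n) = f i - m * n := fun i m => by
    have := hper.sub_int_mul_eq (x := i) m
    rw [Int.cast_id] at this
    linarith
  set d := toIcoDiv hp 1 with hd
  have hd_mem : ∀ j, 1 ≤ j - d j * n ∧ j - d j * n ≤ n := fun j => by
    have := sub_toIcoDiv_zsmul_mem_Ico hp 1 j
    rw [Set.mem_Ico, smul_eq_mul, ← hd] at this
    omega
  have hd_sub : ∀ i j : ℤ, 1 ≤ i → i ≤ n → d (i - d j * n) = - d j := fun i j h1 h2 =>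
    (toIcoDiv_eq_iff hp).2 (by rw [Set.mem_Ico, smul_eq_mul]; constructor <;> linarith)
  calc ∑ i ∈ Icc (1 : ℤ) n, (f i - i)
      = #((Icc (1 : ℤ) n).sigma fun i => Ico i (f i)) := by
        rw [card_sigma, Nat.cast_sum]
        refine sum_congr rfl fun i _ => ?_
        rw [Int.card_Ico, Int.toNat_of_nonneg (by linarith [hle i])]
    _ = #((Icc (1 : ℤ) n).sigma fun j => {i ∈ Ioc (j - N) j | j < f i}) := by
        congr 1
        refine card_nbij' (fun p => ⟨p.2 - d p.2 * n, p.1 - d p.2 * n⟩)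
          (fun p => ⟨p.2 - d p.2 * n, p.1 - d p.2 * n⟩) ?_ ?_ ?_ ?_
        · rintro ⟨i, j⟩ hij
          simp only [coe_sigma, Set.mem_sigma_iff, coe_Icc, Set.mem_Icc, coe_Ico, Set.mem_Ico,
            coe_filter, mem_Ioc, Set.mem_ofPred_eq] at hij ⊢
          have := hd_mem j
          have := hlt i
          rw [hsub]
          omega
        · rintro ⟨j, i⟩ hij
          simp only [coe_sigma, Set.mem_sigma_iff, coe_Icc, Set.mem_Icc, coe_Ico, Set.mem_Ico,
            coe_filter, mem_Ioc, Set.mem_ofPred_eq] at hij ⊢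
          have := hd_mem i
          rw [hsub]
          omega
        · rintro ⟨i, j⟩ hij
          simp only [coe_sigma, Set.mem_sigma_iff, coe_Icc, Set.mem_Icc] at hij
          simp only [hd_sub i j hij.1.1 hij.1.2, neg_mul, sub_neg_eq_add, sub_add_cancel]
        · rintro ⟨j, i⟩ hij
          simp only [coe_sigma, Set.mem_sigma_iff, coe_Icc, Set.mem_Icc] at hij
          simp only [hd_sub j i hij.1.1 hij.1.2, neg_mul, sub_neg_eq_add, sub_add_cancel]
    _ = ∑ j ∈ Icc (1 : ℤ) n, (#{i ∈ Ioc (j - N) j | j < f i} : ℤ) := by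
        rw [card_sigma, Nat.cast_sum]

end DoubleCounting

section NextOccurrence

variable {α : Type*} {w : ℤ → α} {f : ℤ → ℤ} {N : ℤ}

def IsNextOccurrence (w : ℤ → α) (f : ℤ → ℤ) : Prop :=
  ∀ i, IsLeast {j | i ≤ j ∧ w j = w (i - 1)} (f i)

theorem isNextOccurrence_comp_iff {β : Type*} {g : α → β} (hg : Injective g) :
    IsNextOccurrence (g ∘ w) f ↔ IsNextOccurrence w f := by
  simp only [IsNextOccurrence, comp_apply, hg.eq_iff]

theorem exists_isNextOccurrence (hN : 0 < N) (hper : Periodic w N) :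
    ∃ f, IsNextOccurrence w f := by
  have : ∀ i, ∃ m, IsLeast {j | i ≤ j ∧ w j = w (i - 1)} m := fun i =>
    let ⟨m, hm, hmin⟩ := Int.exists_least_of_bdd (P := fun j => i ≤ j ∧ w j = w (i - 1))
      ⟨i, fun _ h => h.1⟩ ⟨i - 1 + N, by linarith, hper _⟩
    ⟨m, hm, hmin⟩
  choose f hf using this
  exact ⟨f, hf⟩

theorem exists_isGreatest_occurrence (hN : 0 < N) (hper : Periodic w N) (z m : ℤ) :
    ∃ p, IsGreatest {y | y ≤ m ∧ w y = w z} p := by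
  obtain ⟨y, hy, hyz⟩ := hper.exists_mem_Ico hN z (m - N)
  obtain ⟨p, hp, hmax⟩ := Int.exists_greatest_of_bdd (P := fun y => y ≤ m ∧ w y = w z)
    ⟨m, fun _ h => h.1⟩ ⟨y, by linarith [hy.2], hyz.symm⟩
  exact ⟨p, hp, hmax⟩

namespace IsNextOccurrence

theorem le (hf : IsNextOccurrence w f) (i : ℤ) : i ≤ f i := (hf i).1.1

theorem apply_eq (hf : IsNextOccurrence w f) (i : ℤ) : w (f i) = w (i - 1) := (hf i).1.2

theorem le_of_apply_eq (hf : IsNextOccurrence w f) {i j : ℤ} (hij : i ≤ j)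
    (hj : w j = w (i - 1)) : f i ≤ j :=
  (hf i).2 ⟨hij, hj⟩

theorem lt_add (hf : IsNextOccurrence w f) (hN : 0 < N) (hper : Periodic w N) (i : ℤ) :
    f i < i + N := by
  have := hf.le_of_apply_eq (j := i - 1 + N) (by linarith) (hper _)
  linarith

theorem apply_lt (hf : IsNextOccurrence w f) {i i' : ℤ} (h : i < i')
    (hw : w (i - 1) = w (i' - 1)) : f i < i' := by
  have := hf.le_of_apply_eq (j := i' - 1) (by omega) hw.symm
  omega

theorem eq_of_lt_apply (hf : IsNextOccurrence w f) {i i' j : ℤ} (hi : i ≤ j) (hj : j < f i)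
    (hi' : i' ≤ j) (hj' : j < f i') (h : w (i - 1) = w (i' - 1)) : i = i' := by
  by_contra hne
  wlog hlt : i < i' generalizing i i'
  · exact this hi' hj' hi hj h.symm (Ne.symm hne) ((lt_or_gt_of_ne hne).resolve_left hlt)
  linarith [hf.apply_lt hlt h]

theorem injective (hf : IsNextOccurrence w f) : Injective f := by
  intro a b hab
  by_contra hne
  wlog hlt : a < b generalizing a b
  · exact this hab.symm (Ne.symm hne) ((lt_or_gt_of_ne hne).resolve_left hlt)
  have := hf.apply_lt hlt (by rw [← hf.apply_eq, ← hf.apply_eq, hab])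
  linarith [hf.le b]

theorem lt_apply_add_one (hf : IsNextOccurrence w f) {a : α} {m p : ℤ}
    (hp : IsGreatest {z | z ≤ m ∧ w z = a} p) : m < f (p + 1) := by
  by_contra! h
  have := hp.2 ⟨h, (hf.apply_eq _).trans (by rw [add_sub_cancel_right]; exact hp.1.2)⟩
  linarith [hf.le (p + 1)]

theorem surjective (hf : IsNextOccurrence w f) (hN : 0 < N) (hper : Periodic w N) :
    Surjective f := by
  intro m
  obtain ⟨p, hp⟩ := exists_isGreatest_occurrence hN hper m (m - 1)
  have := hf.lt_apply_add_one hp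
  have := hf.le_of_apply_eq (i := p + 1) (j := m) (by linarith [hp.1.1])
    (by rw [add_sub_cancel_right, hp.1.2])
  exact ⟨p + 1, by omega⟩

theorem add_eq (hf : IsNextOccurrence w f) {n : ℤ} {e : α → α} (he : Injective e)
    (hw : ∀ j, w (j + n) = e (w j)) (i : ℤ) : f (i + n) = f i + n := by
  refine (hf (i + n)).unique ⟨⟨by linarith [hf.le i], ?_⟩, fun j hj => ?_⟩
  · rw [← sub_add_eq_add_sub, hw, hw, hf.apply_eq]
  · have := hf.le_of_apply_eq (i := i) (j := j - n) (by linarith [hj.1]) <| he <| by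
      rw [← hw, ← hw, sub_add_cancel, hj.2, sub_add_eq_add_sub]
    linarith

theorem card_crossing (hf : IsNextOccurrence w f) [Fintype α] [DecidableEq α] (hN : 0 < N)
    (hper : Periodic w N) (hsurj : Surjective w) (j : ℤ) :
    #{i ∈ Ioc (j - N) j | j < f i} = Fintype.card α - 1 := by
  rw [← card_univ, ← card_erase_of_mem (mem_univ (w j))]
  refine card_bij (fun i _ => w (i - 1)) (fun i hi => ?_) (fun i hi i' hi' h => ?_) fun a ha => ?_
  · simp only [mem_filter, mem_Ioc] at hi
    exact mem_erase.2 ⟨fun h => hi.2.not_ge (hf.le_of_apply_eq hi.1.2 h.symm), mem_univ _⟩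
  · simp only [mem_filter, mem_Ioc] at hi hi'
    exact hf.eq_of_lt_apply hi.1.2 hi.2 hi'.1.2 hi'.2 h
  · obtain ⟨z, rfl⟩ := hsurj a
    obtain ⟨p, hp⟩ := exists_isGreatest_occurrence hN hper z j
    have hpj : p ≠ j := fun h => (mem_erase.1 ha).1 (by rw [← h, hp.1.2])
    have hcross := hf.lt_apply_add_one hp
    have := hf.lt_add hN hper (p + 1)
    refine ⟨p + 1, ?_, by rw [add_sub_cancel_right, hp.1.2]⟩
    simp only [mem_filter, mem_Ioc]
    exact ⟨⟨by linarith, by have := hp.1.1; omega⟩, hcross⟩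

end IsNextOccurrence

end NextOccurrence

theorem fA_is_affine_permutation_general (k n h : ℕ) (hkn : k < n) (hh : 1 ≤ h)
    (v : ℤ → Fin (k + 1) → ℂ)
    (hper : ∀ j : ℤ, v (j + h * n) = v j)
    (hstd : ∀ j : ℤ, ∃ ℓ : Fin (k + 1), v j = Pi.single ℓ 1)
    (hrows : ∀ ℓ : Fin (k + 1), ∃ j : ℤ, v j ℓ ≠ 0)
    (hshift : ∃ σ : Equiv.Perm (Fin (k + 1)), ∀ (j : ℤ) (ℓ : Fin (k + 1)),
      v (j + n) ℓ = v j (σ ℓ)) :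
    ∃ f : ℤ → ℤ,
      (∀ i : ℤ, IsLeast {j : ℤ | i ≤ j ∧ v j = v (i - 1)} (f i)) ∧
      Function.Bijective f ∧
      (∀ i : ℤ, f (i + n) = f i + n) ∧
      (∀ i : ℤ, i ≤ f i) ∧
      ∑ i ∈ Finset.Icc (1 : ℤ) n, (f i - i) = k * n := by
  obtain ⟨σ, hσ⟩ := hshift
  choose c hc using hstd
  obtain rfl : v = fun j => Pi.single (c j) 1 := funext hc
  have hsingle := Pi.single_left_injective (ι := Fin (k + 1)) (one_ne_zero (α := ℂ))
  have hN : (0 : ℤ) < h * n := by exact_mod_cast Nat.mul_pos hh (by omega)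
  have hcper : Periodic c (h * n) := fun j => hsingle (hper j)
  have hcsurj : Surjective c := fun ℓ =>
    let ⟨j, hj⟩ := hrows ℓ
    ⟨j, by_contra fun hne => hj (by simp [Ne.symm hne])⟩
  have hcshift : ∀ j, c (j + n) = σ.symm (c j) := fun j =>
    hsingle <| by dsimp only; rw [← Pi.single_comp_equiv]; exact funext (hσ j)
  obtain ⟨f, hf⟩ := exists_isNextOccurrence hN hcper
  have hadd := hf.add_eq σ.symm.injective hcshift
  refine ⟨f, (isNextOccurrence_comp_iff hsingle).2 hf, ⟨hf.injective, hf.surjective hN hcper⟩,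
    hadd, hf.le, ?_⟩
  rw [sum_sub_eq_sum_card_crossing (by omega) hadd hf.le (hf.lt_add hN hcper)]
  simp [hf.card_crossing hN hcper hcsurj, mul_comm (n : ℤ)]

/-- Let `v : ℤ → ℂ^{k+1}` be an `h*n`-periodic sequence of columns, each a
standard basis vector, with all rows nonzero, and such that shifting the columns by `n`
permutes the rows. Then `f_A (i) = min {j ≥ i : v j = v (i-1)}` is a well-defined bijection
with `f_A (i+n) = f_A i + n`, `f_A i ≥ i`, and `∑_{i=1}^n (f_A i - i) = k * n`. -/
theorem fA_is_affine_permutation (k n h : ℕ) (hk : 0 < k) (hkn : k < n) (hh : 1 ≤ h)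
    (v : ℤ → Fin (k + 1) → ℂ)
    (hper : ∀ j : ℤ, v (j + h * n) = v j)
    (hstd : ∀ j : ℤ, ∃ ℓ : Fin (k + 1), v j = Pi.single ℓ 1)
    (hrows : ∀ ℓ : Fin (k + 1), ∃ j : ℤ, v j ℓ ≠ 0)
    (hshift : ∃ σ : Equiv.Perm (Fin (k + 1)), ∀ (j : ℤ) (ℓ : Fin (k + 1)),
      v (j + n) ℓ = v j (σ ℓ)) :
    ∃ f : ℤ → ℤ,
      (∀ i : ℤ, IsLeast {j : ℤ | i ≤ j ∧ v j = v (i - 1)} (f i)) ∧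
      Function.Bijective f ∧
      (∀ i : ℤ, f (i + n) = f i + n) ∧
      (∀ i : ℤ, i ≤ f i) ∧
      ∑ i ∈ Finset.Icc (1 : ℤ) n, (f i - i) = k * n :=
  fA_is_affine_permutation_general k n h hkn hh v hper hstd hrows hshift
end

section
/- Let r = (r_{ij})_{i,j ∈ ℤ} be a matrix of integers satisfying: (C'_1) r_{ij} = j - i + 1 when j < i; (C'_2) r_{ij} = k when j - i ≥ n - 1; (C_3) r_{ij} - r_{i+1,j} ∈ {0,1} and r_{ij} - r_{i,j-1} ∈ {0,1}; (C_4) if r_{i+1,j-1} = r_{i+1,j} = r_{i,j-1} then r_{i+1,j-1} = r_{ij}; (C_5) r_{i+n,j+n} = r_{ij}. Define f: ℤ → ℤ by f(i) = j if and only if r_{ij} = r_{i+1,j} = r_{i,j-1} > r_{i+1,j-1}. Then f is a well-defined bijection ℤ → ℤ satisfying f(i+n) = f(i)+n, i ≤ f(i) ≤ i+n, and ∑_{i=1}^n (f(i)-i) = kn. -/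
/-!
By C₃ and C₄ (the latter forbids the one bad `2 × 2` pattern), the columns where rows `i` and
`i + 1` agree form an up-set of `ℤ`, and so do the rows where columns `j - 1` and `j` differ.
C₁ and C₂ bound both up-sets, so `f i` is the least column where rows `i` and `i + 1` agree,
and `j` is sent back to one less than the least row where columns `j - 1` and `j` differ; both
descriptions single out the same corners, hence they are inverse to each other.

For the sum, `f i - i` is the number of ones in `r i · - r (i + 1) ·` over the window
`[i, i + n)`, which equals `k` plus the difference of the window sums of rows `i` and `i + 1`;
these telescope over a period.
-/

open Finset

theorem Int.exists_forall_iff_le {P : ℤ → Prop} (hP : ∀ j, P j → P (j + 1))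
    (hbdd : ∃ b, ∀ j, P j → b ≤ j) (hne : ∃ j, P j) : ∃ m, ∀ j, P j ↔ m ≤ j := by
  obtain ⟨m, hm, hleast⟩ := Int.exists_least_of_bdd hbdd hne
  refine ⟨m, fun j => ⟨hleast j, fun hj => ?_⟩⟩
  induction j, hj using Int.leInduction with
  | base => exact hm
  | succ j _ ih => exact hP j ih

theorem Int.sum_Ico_sub_add_one {G : Type*} [AddCommGroup G] (A : ℤ → G) {a b : ℤ}
    (hab : a ≤ b) : ∑ i ∈ Ico a b, (A i - A (i + 1)) = A a - A b := by
  induction b, hab using Int.leInduction with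
  | base => simp
  | succ b hab ih =>
    rw [Ico_add_one_right_eq_Icc, ← Ico_insert_right hab, sum_insert right_notMem_Ico, ih]
    abel

section CyclicRankMatrix

variable {k n : ℤ} {r : ℤ → ℤ → ℤ} {i j : ℤ}

/-- Condition C₃. -/
def HasUnitSteps (r : ℤ → ℤ → ℤ) : Prop :=
  ∀ i j : ℤ, (r i j - r (i + 1) j = 0 ∨ r i j - r (i + 1) j = 1) ∧
    (r i j - r i (j - 1) = 0 ∨ r i j - r i (j - 1) = 1)

/-- Condition C₄. -/
def HasCornerCondition (r : ℤ → ℤ → ℤ) : Prop :=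
  ∀ i j : ℤ, r (i + 1) (j - 1) = r (i + 1) j → r (i + 1) (j - 1) = r i (j - 1) →
    r (i + 1) (j - 1) = r i j

/-- The condition characterising `f i = j`. -/
def IsRankCorner (r : ℤ → ℤ → ℤ) (i j : ℤ) : Prop :=
  r i j = r (i + 1) j ∧ r i j = r i (j - 1) ∧ r (i + 1) (j - 1) < r i j

noncomputable def rowWindowSum (r : ℤ → ℤ → ℤ) (n i : ℤ) : ℤ :=
  ∑ j ∈ Ico i (i + n), r i j

theorem rowEq_add_one (h3 : HasUnitSteps r) (h4 : HasCornerCondition r)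
    (h : r i j = r (i + 1) j) : r i (j + 1) = r (i + 1) (j + 1) := by
  have corner := h4 i (j + 1)
  have step := h3 i (j + 1)
  have step' := h3 (i + 1) (j + 1)
  simp only [add_sub_cancel_right] at corner step step'
  omega

theorem colNe_add_one (h3 : HasUnitSteps r) (h4 : HasCornerCondition r)
    (h : r i j ≠ r i (j - 1)) : r (i + 1) j ≠ r (i + 1) (j - 1) := by
  have := h4 i j
  have := h3 i j
  have := h3 i (j - 1)
  have := h3 (i + 1) j
  omega

theorem le_of_rowEq (h1 : ∀ i j : ℤ, j < i → r i j = j - i + 1)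
    (h : r i j = r (i + 1) j) : i ≤ j := by
  by_contra! hji
  have := h1 i j hji
  have := h1 (i + 1) j (by omega)
  omega

theorem rowEq_of_add_le (h2 : ∀ i j : ℤ, n - 1 ≤ j - i → r i j = k) (hj : i + n ≤ j) :
    r i j = r (i + 1) j := by
  rw [h2 i j (by omega), h2 (i + 1) j (by omega)]

theorem le_and_le_add_of_forall_rowEq_iff (h1 : ∀ i j : ℤ, j < i → r i j = j - i + 1)
    (h2 : ∀ i j : ℤ, n - 1 ≤ j - i → r i j = k) {m : ℤ}
    (hm : ∀ j, r i j = r (i + 1) j ↔ m ≤ j) : i ≤ m ∧ m ≤ i + n :=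
  ⟨le_of_rowEq h1 ((hm m).2 le_rfl), (hm _).1 (rowEq_of_add_le h2 le_rfl)⟩

theorem exists_forall_rowEq_iff_le (h1 : ∀ i j : ℤ, j < i → r i j = j - i + 1)
    (h2 : ∀ i j : ℤ, n - 1 ≤ j - i → r i j = k) (h3 : HasUnitSteps r)
    (h4 : HasCornerCondition r) (i : ℤ) : ∃ m, ∀ j, r i j = r (i + 1) j ↔ m ≤ j :=
  Int.exists_forall_iff_le (fun _ => rowEq_add_one h3 h4) ⟨i, fun _ => le_of_rowEq h1⟩
    ⟨i + n, rowEq_of_add_le h2 le_rfl⟩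

theorem exists_forall_colNe_iff_le (h1 : ∀ i j : ℤ, j < i → r i j = j - i + 1)
    (h2 : ∀ i j : ℤ, n - 1 ≤ j - i → r i j = k) (h3 : HasUnitSteps r)
    (h4 : HasCornerCondition r) (j : ℤ) : ∃ m, ∀ i, r i j ≠ r i (j - 1) ↔ m ≤ i := by
  refine Int.exists_forall_iff_le (fun _ => colNe_add_one h3 h4) ⟨j - n + 1, fun i hi => ?_⟩
    ⟨j + 1, ?_⟩
  · by_contra! hij
    exact hi ((h2 i j (by omega)).trans (h2 i (j - 1) (by omega)).symm)
  · rw [h1 (j + 1) j (by omega), h1 (j + 1) (j - 1) (by omega)]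
    omega

theorem isRankCorner_iff_rowEq (h3 : HasUnitSteps r) :
    IsRankCorner r i j ↔ r i j = r (i + 1) j ∧ r i (j - 1) ≠ r (i + 1) (j - 1) := by
  have := h3 i j
  have := h3 i (j - 1)
  have := h3 (i + 1) j
  unfold IsRankCorner
  omega

theorem isRankCorner_iff_colNe (h3 : HasUnitSteps r) :
    IsRankCorner r i j ↔ r i j = r i (j - 1) ∧ r (i + 1) j ≠ r (i + 1) (j - 1) := by
  have := h3 i j
  have := h3 i (j - 1)
  have := h3 (i + 1) j
  unfold IsRankCorner
  omega

theorem rowEq_add_period_iff (h5 : ∀ i j : ℤ, r (i + n) (j + n) = r i j) :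
    r (i + n) j = r (i + n + 1) j ↔ r i (j - n) = r (i + 1) (j - n) := by
  rw [← h5 i (j - n), ← h5 (i + 1) (j - n), sub_add_cancel, add_right_comm]

theorem sum_rowDiff_eq_sub (h3 : HasUnitSteps r) {m : ℤ}
    (hm : ∀ j, r i j = r (i + 1) j ↔ m ≤ j) (him : i ≤ m) (hmn : m ≤ i + n) :
    ∑ j ∈ Ico i (i + n), (r i j - r (i + 1) j) = m - i := by
  have hdiff : ∀ j, r i j - r (i + 1) j = if j < m then 1 else 0 := by
    intro j
    have := (h3 i j).1
    have := hm j
    split_ifs <;> omega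
  have hfilter : {j ∈ Ico i (i + n) | j < m} = Ico i m := by
    ext j
    simp only [mem_filter, mem_Ico]
    omega
  simp only [hdiff, sum_boole, hfilter, Int.card_Ico]
  omega

theorem sum_rowDiff_eq_rowWindowSum_sub (h1 : ∀ i j : ℤ, j < i → r i j = j - i + 1)
    (h2 : ∀ i j : ℤ, n - 1 ≤ j - i → r i j = k) (hn : 0 ≤ n) (i : ℤ) :
    ∑ j ∈ Ico i (i + n), (r i j - r (i + 1) j) =
      rowWindowSum r n i - rowWindowSum r n (i + 1) + k := by
  have hshift : ∑ j ∈ insert (i + n) (Ico i (i + n)), r (i + 1) j =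
      ∑ j ∈ insert i (Ico (i + 1) (i + 1 + n)), r (i + 1) j := by
    congr 1
    ext j
    simp only [mem_insert, mem_Ico]
    omega
  rw [sum_insert (by simp), sum_insert (by simp), h1 (i + 1) i (by omega),
    h2 (i + 1) (i + n) (by omega)] at hshift
  rw [sum_sub_distrib, rowWindowSum, rowWindowSum]
  linarith

theorem rowWindowSum_add_period (h5 : ∀ i j : ℤ, r (i + n) (j + n) = r i j) (i : ℤ) :
    rowWindowSum r n (i + n) = rowWindowSum r n i := by
  rw [rowWindowSum, rowWindowSum, ← sum_Ico_add']
  exact sum_congr rfl fun j _ => h5 i j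

theorem sum_Icc_sub_eq_mul (h1 : ∀ i j : ℤ, j < i → r i j = j - i + 1)
    (h2 : ∀ i j : ℤ, n - 1 ≤ j - i → r i j = k) (h3 : HasUnitSteps r)
    (h5 : ∀ i j : ℤ, r (i + n) (j + n) = r i j) {f : ℤ → ℤ}
    (hf : ∀ i j, r i j = r (i + 1) j ↔ f i ≤ j) : ∑ i ∈ Icc 1 n, (f i - i) = k * n := by
  have hbounds := fun i => le_and_le_add_of_forall_rowEq_iff h1 h2 (hf i)
  have hn : 0 ≤ n := by linarith [hbounds 0]
  calc ∑ i ∈ Icc 1 n, (f i - i)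
      = ∑ i ∈ Ico 1 (n + 1), (rowWindowSum r n i - rowWindowSum r n (i + 1) + k) := by
        rw [Ico_add_one_right_eq_Icc]
        refine sum_congr rfl fun i _ => ?_
        rw [← sum_rowDiff_eq_rowWindowSum_sub h1 h2 hn,
          sum_rowDiff_eq_sub h3 (hf i) (hbounds i).1 (hbounds i).2]
    _ = k * n := by
        rw [sum_add_distrib, Int.sum_Ico_sub_add_one _ (by omega), add_comm n 1,
          rowWindowSum_add_period h5, sum_const, Int.card_Ico, sub_self, zero_add, nsmul_eq_mul,
          add_sub_cancel_left, Int.toNat_of_nonneg hn, mul_comm]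

end CyclicRankMatrix

theorem cyclic_rank_matrix_gives_bounded_affine_permutation_general
    (k n : ℤ)
    (r : ℤ → ℤ → ℤ)
    (hC1 : ∀ i j : ℤ, j < i → r i j = j - i + 1)
    (hC2 : ∀ i j : ℤ, n - 1 ≤ j - i → r i j = k)
    (hC3 : ∀ i j : ℤ, (r i j - r (i + 1) j = 0 ∨ r i j - r (i + 1) j = 1) ∧
      (r i j - r i (j - 1) = 0 ∨ r i j - r i (j - 1) = 1))
    (hC4 : ∀ i j : ℤ, r (i + 1) (j - 1) = r (i + 1) j → r (i + 1) (j - 1) = r i (j - 1) →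
      r (i + 1) (j - 1) = r i j)
    (hC5 : ∀ i j : ℤ, r (i + n) (j + n) = r i j) :
    ∃ f : ℤ → ℤ,
      (∀ i j : ℤ, f i = j ↔
        (r i j = r (i + 1) j ∧ r i j = r i (j - 1) ∧ r (i + 1) (j - 1) < r i j)) ∧
      Function.Bijective f ∧
      (∀ i : ℤ, f (i + n) = f i + n) ∧
      (∀ i : ℤ, i ≤ f i ∧ f i ≤ i + n) ∧
      ∑ i ∈ Finset.Icc (1 : ℤ) n, (f i - i) = k * n := by
  choose f hf using exists_forall_rowEq_iff_le hC1 hC2 hC3 hC4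
  choose g hg using exists_forall_colNe_iff_le hC1 hC2 hC3 hC4
  have hcorner_f : ∀ i j, f i = j ↔ IsRankCorner r i j := fun i j => by
    rw [isRankCorner_iff_rowEq hC3, ne_eq, hf, hf]
    omega
  have hcorner_g : ∀ i j, g j - 1 = i ↔ IsRankCorner r i j := fun i j => by
    rw [isRankCorner_iff_colNe hC3, ← not_ne_iff (a := r i j), hg, hg]
    omega
  refine ⟨f, hcorner_f, ?_, fun i => ?_,
    fun i => le_and_le_add_of_forall_rowEq_iff hC1 hC2 (hf i), sum_Icc_sub_eq_mul hC1 hC2 hC3 hC5 hf⟩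
  · refine Function.bijective_iff_has_inverse.2 ⟨fun j => g j - 1, fun i => ?_, fun j => ?_⟩
    · exact (hcorner_g _ _).2 ((hcorner_f _ _).1 rfl)
    · exact (hcorner_f _ _).2 ((hcorner_g _ _).1 rfl)
  · refine eq_of_forall_ge_iff fun j => ?_
    rw [← hf, rowEq_add_period_iff hC5, hf]
    omega

/-- A cyclic rank matrix of type `(k,n)` (conditions C'1, C'2, C3, C4, C5)
determines a bounded affine permutation `f ∈ B(k,n)` via
`f i = j ↔ r i j = r (i+1) j = r i (j-1) > r (i+1) (j-1)`. -/
theorem cyclic_rank_matrix_gives_bounded_affine_permutation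
    (k n : ℤ) (hk : 0 < k) (hkn : k < n)
    (r : ℤ → ℤ → ℤ)
    (hC1 : ∀ i j : ℤ, j < i → r i j = j - i + 1)
    (hC2 : ∀ i j : ℤ, n - 1 ≤ j - i → r i j = k)
    (hC3 : ∀ i j : ℤ, (r i j - r (i + 1) j = 0 ∨ r i j - r (i + 1) j = 1) ∧
      (r i j - r i (j - 1) = 0 ∨ r i j - r i (j - 1) = 1))
    (hC4 : ∀ i j : ℤ, r (i + 1) (j - 1) = r (i + 1) j → r (i + 1) (j - 1) = r i (j - 1) →
      r (i + 1) (j - 1) = r i j)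
    (hC5 : ∀ i j : ℤ, r (i + n) (j + n) = r i j) :
    ∃ f : ℤ → ℤ,
      (∀ i j : ℤ, f i = j ↔
        (r i j = r (i + 1) j ∧ r i j = r i (j - 1) ∧ r (i + 1) (j - 1) < r i j)) ∧
      Function.Bijective f ∧
      (∀ i : ℤ, f (i + n) = f i + n) ∧
      (∀ i : ℤ, i ≤ f i ∧ f i ≤ i + n) ∧
      ∑ i ∈ Finset.Icc (1 : ℤ) n, (f i - i) = k * n :=
  cyclic_rank_matrix_gives_bounded_affine_permutation_general k n r hC1 hC2 hC3 hC4 hC5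
end

section
/- Let M = [v_1, ..., v_N] be an r × N complex matrix of rank r with 0 < r < N, with columns indexed cyclically modulo N. Define f_M: ℤ → ℤ by f_M(i) = min{ j ≥ i : v_i ∈ span(v_{i+1}, ..., v_j) } (with column indices taken modulo N). Then f_M is a bounded affine permutation: f_M is a bijection, f_M(i+N) = f_M(i)+N, i ≤ f_M(i) ≤ i+N, and ∑_{i=1}^N (f_M(i)-i) = rN. -/
/-!
For `i < j`, `f i = j` says that `v i` and `v j` can be exchanged modulo the span of
`v (i + 1), …, v (j - 1)`. This condition is symmetric in `i` and `j`, which makes `f` injective;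
taking for `i` the largest index with `v j ∈ span (v i, …, v (j - 1))` makes it surjective.

Adjoining `v i` to `v (i + 1), …, v j` raises the rank exactly when `j < f i`, so `f i - i` is the
sum over `k < N` of the rank increments `rk [i, i + k] - rk [i + 1, i + k]`. Summed over a period,
periodicity shifts the second term to `rk [i, i + k - 1]`, and the double sum telescopes to `N`
times the rank `r` of a full period of columns.
-/

open Set Submodule Module Function

theorem finrank_span_insert_of_notMem {K V : Type*} [DivisionRing K] [AddCommGroup V]
    [Module K V] [FiniteDimensional K V] {x : V} {s : Set V} (h : x ∉ span K s) :
    finrank K (span K (insert x s)) = finrank K (span K s) + 1 := by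
  have hx : x ≠ 0 := fun h0 => h (h0 ▸ zero_mem _)
  have key := finrank_sup_add_finrank_inf_eq (span K s) (K ∙ x)
  rw [(disjoint_span_singleton_of_notMem h).eq_bot, finrank_bot, add_zero,
    finrank_span_singleton hx] at key
  rw [span_insert, sup_comm, key]

theorem mem_span_insert_and_notMem_comm {K V : Type*} [DivisionRing K] [AddCommGroup V]
    [Module K V] {x y : V} {s : Set V} :
    x ∈ span K (insert y s) ∧ x ∉ span K s ↔ y ∈ span K (insert x s) ∧ y ∉ span K s := by
  suffices h : ∀ x y : V, x ∈ span K (insert y s) ∧ x ∉ span K s →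
      y ∈ span K (insert x s) ∧ y ∉ span K s from ⟨h x y, h y x⟩
  rintro x y ⟨hx, hxs⟩
  exact ⟨mem_span_insert_exchange hx hxs, fun hy => hxs (span_insert_eq_span hy ▸ hx)⟩

theorem Int.sum_range_ite_lt {N : ℕ} {m : ℤ} (h₀ : 0 ≤ m) (hm : m ≤ N) :
    ∑ k ∈ Finset.range N, (if (k : ℤ) < m then 1 else 0 : ℤ) = m := by
  rw [Finset.sum_boole]
  have : (Finset.range N).filter (fun k : ℕ => (k : ℤ) < m) = Finset.range m.toNat := by
    ext k
    simp only [Finset.mem_filter, Finset.mem_range]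
    omega
  rw [this, Finset.card_range, Int.toNat_of_nonneg h₀]

theorem Function.Periodic.sum_Icc_comp_add_one {M : Type*} [AddCommMonoid M] {h : ℤ → M}
    {N : ℤ} (hh : Periodic h N) :
    ∑ i ∈ Finset.Icc 1 N, h (i + 1) = ∑ i ∈ Finset.Icc 1 N, h i := by
  rcases lt_or_ge N 1 with hN | hN
  · simp [Finset.Icc_eq_empty_of_lt hN]
  have hshift : ∑ i ∈ Finset.Icc 1 N, h (i + 1) = ∑ i ∈ Finset.Icc (1 + 1) (N + 1), h i := by
    rw [← Finset.map_add_right_Icc, Finset.sum_map]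
    rfl
  rw [hshift, ← Finset.insert_Icc_right_eq_Icc_add_one (by omega),
    ← Finset.insert_Icc_add_one_left_eq_Icc hN, Finset.sum_insert (by simp),
    Finset.sum_insert (by simp), add_comm N, hh]

section FirstSpanIndex

variable {K V : Type*} [DivisionRing K] [AddCommGroup V] [Module K V]

variable (K) in
def IsFirstSpanIndex (v : ℤ → V) (f : ℤ → ℤ) : Prop :=
  ∀ i, IsLeast {j | i ≤ j ∧ v i ∈ span K (v '' Icc (i + 1) j)} (f i)

theorem exists_isFirstSpanIndex {v : ℤ → V}
    (h : ∀ i, ∃ j, i ≤ j ∧ v i ∈ span K (v '' Icc (i + 1) j)) :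
    ∃ f, IsFirstSpanIndex K v f :=
  ⟨fun i => sInf {j | i ≤ j ∧ v i ∈ span K (v '' Icc (i + 1) j)}, fun i =>
    have hbdd : BddBelow {j | i ≤ j ∧ v i ∈ span K (v '' Icc (i + 1) j)} := ⟨i, fun _ hj => hj.1⟩
    ⟨Int.csInf_mem (h i) hbdd, fun _ hj => csInf_le hbdd hj⟩⟩

theorem Function.Periodic.span_image_Ico_eq_top {α : Type*} [AddCommGroup α] [LinearOrder α]
    [IsOrderedAddMonoid α] [Archimedean α] {v : α → V} {c : α} (hv : Periodic v c) (hc : 0 < c)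
    (hspan : span K (range v) = ⊤) (a : α) : span K (v '' Ico a (a + c)) = ⊤ :=
  top_unique <| hspan ▸ span_mono (range_subset_iff.2 fun x =>
    let ⟨y, hy, hxy⟩ := hv.exists_mem_Ico hc x a
    ⟨y, hy, hxy.symm⟩)

theorem Function.Periodic.mem_span_image_Icc {v : ℤ → V} {N : ℤ} (hv : Periodic v N)
    (hN : 0 < N) (hspan : span K (range v) = ⊤) {a b : ℤ} (hab : a + N ≤ b + 1) (x : ℤ) :
    v x ∈ span K (v '' Icc a b) := by
  rw [← Ico_add_one_right_eq_Icc]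
  refine span_mono (image_mono (Ico_subset_Ico_right hab)) ?_
  rw [hv.span_image_Ico_eq_top hN hspan a]
  exact mem_top

namespace IsFirstSpanIndex

variable {v : ℤ → V} {f : ℤ → ℤ} {i j : ℤ}

theorem le_apply (hf : IsFirstSpanIndex K v f) (i : ℤ) : i ≤ f i :=
  (hf i).1.1

theorem mem_span_Icc_iff (hf : IsFirstSpanIndex K v f) (hij : i ≤ j) :
    v i ∈ span K (v '' Icc (i + 1) j) ↔ f i ≤ j :=
  ⟨fun h => (hf i).2 ⟨hij, h⟩,
    fun h => span_mono (image_mono (Icc_subset_Icc_right h)) (hf i).1.2⟩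

theorem apply_eq_self_iff (hf : IsFirstSpanIndex K v f) : f i = i ↔ v i = 0 := by
  rw [← mem_bot K, ← span_empty, ← image_empty v, ← Icc_eq_empty (lt_add_one i).not_ge,
    hf.mem_span_Icc_iff le_rfl, (hf.le_apply i).ge_iff_eq']

theorem apply_eq_iff_of_lt (hf : IsFirstSpanIndex K v f) (hij : i < j) :
    f i = j ↔ v j ∈ span K (v '' Icc i (j - 1)) ∧ v j ∉ span K (v '' Icc (i + 1) (j - 1)) := by
  rw [← insert_Icc_add_one_left_eq_Icc (by omega : i ≤ j - 1), image_insert_eq,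
    ← mem_span_insert_and_notMem_comm, ← image_insert_eq,
    insert_Icc_sub_one_right_eq_Icc (by omega : i + 1 ≤ j), hf.mem_span_Icc_iff hij.le,
    hf.mem_span_Icc_iff (by omega : i ≤ j - 1)]
  omega

theorem mem_span_Icc_apply_sub_one (hf : IsFirstSpanIndex K v f) (i : ℤ) :
    v (f i) ∈ span K (v '' Icc i (f i - 1)) := by
  rcases (hf.le_apply i).eq_or_lt with h | h
  · rw [← h, hf.apply_eq_self_iff.1 h.symm]
    exact zero_mem _
  · exact ((hf.apply_eq_iff_of_lt h).1 rfl).1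

theorem apply_ne_of_lt (hf : IsFirstSpanIndex K v f) (hij : i < j) : f i ≠ f j := fun hfij => by
  have hfi : i < f i := hij.trans_le (hfij ▸ hf.le_apply j)
  refine ((hf.apply_eq_iff_of_lt hfi).1 rfl).2 (span_mono (image_mono (Icc_subset_Icc_left hij)) ?_)
  rw [hfij]
  exact hf.mem_span_Icc_apply_sub_one j

theorem injective (hf : IsFirstSpanIndex K v f) : Injective f :=
  .of_lt_imp_ne fun _ _ => hf.apply_ne_of_lt

theorem surjective (hf : IsFirstSpanIndex K v f)
    (h : ∀ j, ∃ i ≤ j, v j ∈ span K (v '' Icc i (j - 1))) : Surjective f := by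
  intro j
  obtain ⟨i, ⟨hij, hi⟩, hmax⟩ := Int.exists_greatest_of_bdd ⟨j, fun _ hi => hi.1⟩ (h j)
  refine ⟨i, ?_⟩
  rcases hij.eq_or_lt with rfl | hlt
  · rw [hf.apply_eq_self_iff, ← mem_bot K, ← span_empty, ← image_empty v,
      ← Icc_eq_empty (sub_one_lt i).not_ge]
    exact hi
  · exact (hf.apply_eq_iff_of_lt hlt).2 ⟨hi, fun h' => by linarith [hmax (i + 1) ⟨hlt, h'⟩]⟩

theorem finrank_span_Icc [FiniteDimensional K V] (hf : IsFirstSpanIndex K v f) (hij : i ≤ j) :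
    finrank K (span K (v '' Icc i j)) =
      finrank K (span K (v '' Icc (i + 1) j)) + if j < f i then 1 else 0 := by
  rw [← insert_Icc_add_one_left_eq_Icc hij, image_insert_eq]
  split_ifs with h
  · exact finrank_span_insert_of_notMem (by rwa [hf.mem_span_Icc_iff hij, not_le])
  · rw [span_insert_eq_span ((hf.mem_span_Icc_iff hij).2 (not_lt.1 h)), add_zero]

theorem apply_add_period (hf : IsFirstSpanIndex K v f) {c : ℤ} (hv : Periodic v c) (i : ℤ) :
    f (i + c) = f i + c := by
  have key : ∀ j, i ≤ j → (f (i + c) ≤ j + c ↔ f i ≤ j) := fun j hj => by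
    rw [← hf.mem_span_Icc_iff hj, ← hf.mem_span_Icc_iff (by omega), hv, add_right_comm,
      ← image_add_const_Icc, image_image, funext hv]
  have := (key (f (i + c) - c) (by linarith [hf.le_apply (i + c)])).1 (by omega)
  linarith [(key (f i) (hf.le_apply i)).2 le_rfl]

section Periodic

variable {N : ℤ}

theorem apply_le_add_period (hf : IsFirstSpanIndex K v f) (hv : Periodic v N) (hN : 0 < N)
    (hspan : span K (range v) = ⊤) (i : ℤ) : f i ≤ i + N :=
  (hf i).2 ⟨by omega, hv.mem_span_image_Icc hN hspan (by omega) i⟩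

theorem bijective (hf : IsFirstSpanIndex K v f) (hv : Periodic v N) (hN : 0 < N)
    (hspan : span K (range v) = ⊤) : Bijective f :=
  ⟨hf.injective, hf.surjective fun j =>
    ⟨j - N, by omega, hv.mem_span_image_Icc hN hspan (by omega) j⟩⟩

end Periodic

theorem sum_Icc_apply_sub_self [FiniteDimensional K V] (hf : IsFirstSpanIndex K v f) {N : ℕ}
    (hv : Periodic v N) (hN : 0 < N) (hspan : span K (range v) = ⊤) :
    ∑ i ∈ Finset.Icc (1 : ℤ) N, (f i - i) = finrank K V * N := by
  set U : ℤ → ℕ → ℤ := fun i k => finrank K (span K (v '' Ico i (i + k)))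
  have hU : ∀ k, Periodic (fun i => U i k) N := fun k i => by
    simp only [U]
    rw [add_right_comm, ← image_add_const_Ico, image_image, funext hv]
  have hstep : ∀ i, f i - i = ∑ k ∈ Finset.range N, (U i (k + 1) - U (i + 1) k) := fun i => by
    rw [← Int.sum_range_ite_lt (sub_nonneg.2 (hf.le_apply i))
      (by linarith [hf.apply_le_add_period hv (by omega) hspan i])]
    refine Finset.sum_congr rfl fun k _ => ?_
    simp only [U]
    rw [Nat.cast_succ, ← add_assoc, add_right_comm i 1, Ico_add_one_right_eq_Icc,
      Ico_add_one_right_eq_Icc, hf.finrank_span_Icc (by omega)]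
    push_cast
    simp only [lt_sub_iff_add_lt', add_sub_cancel_left]
  calc ∑ i ∈ Finset.Icc (1 : ℤ) N, (f i - i)
      = ∑ i ∈ Finset.Icc (1 : ℤ) N, ∑ k ∈ Finset.range N, (U i (k + 1) - U (i + 1) k) :=
        Finset.sum_congr rfl fun i _ => hstep i
    _ = ∑ i ∈ Finset.Icc (1 : ℤ) N, ∑ k ∈ Finset.range N, (U i (k + 1) - U i k) := by
        simp only [Finset.sum_sub_distrib]
        rw [Finset.sum_comm (f := fun i k => U (i + 1) k),
          Finset.sum_comm (f := fun i k => U i k)]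
        simp only [(hU _).sum_Icc_comp_add_one]
    _ = ∑ i ∈ Finset.Icc (1 : ℤ) N, (finrank K V : ℤ) := Finset.sum_congr rfl fun i _ => by
        rw [Finset.sum_range_sub (U i)]
        simp only [U]
        rw [hv.span_image_Ico_eq_top (by omega) hspan, Nat.cast_zero, add_zero, Ico_self,
          image_empty, span_empty, finrank_top, finrank_bot, Nat.cast_zero, sub_zero]
    _ = finrank K V * N := by simp [mul_comm]

end IsFirstSpanIndex

end FirstSpanIndex

theorem cyclic_rank_function_is_bounded_affine_general (r N : ℕ) (hrN : r < N)
    (v : ℤ → Fin r → ℂ)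
    (hper : ∀ i : ℤ, v (i + N) = v i)
    (hrank : Submodule.span ℂ (Set.range v) = ⊤) :
    ∃ f : ℤ → ℤ,
      (∀ i : ℤ, IsLeast
        {j : ℤ | i ≤ j ∧ v i ∈ Submodule.span ℂ (v '' Set.Icc (i + 1) j)} (f i)) ∧
      Function.Bijective f ∧
      (∀ i : ℤ, f (i + N) = f i + N) ∧
      (∀ i : ℤ, i ≤ f i ∧ f i ≤ i + N) ∧
      ∑ i ∈ Finset.Icc (1 : ℤ) N, (f i - i) = r * N := by
  have hN : 0 < N := by omega
  obtain ⟨f, hf⟩ := exists_isFirstSpanIndex fun i =>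
    ⟨i + N, by omega, Periodic.mem_span_image_Icc hper (by omega) hrank (by omega) i⟩
  refine ⟨f, hf, hf.bijective hper (by omega) hrank, hf.apply_add_period hper,
    fun i => ⟨hf.le_apply i, hf.apply_le_add_period hper (by omega) hrank i⟩, ?_⟩
  rw [hf.sum_Icc_apply_sub_self hper hN hrank, Module.finrank_fin_fun]

/-- For an `r × N` complex matrix of rank `r` with `0 < r < N`, columns extended
`N`-periodically, the function `f_M (i) = min { j ≥ i : v i ∈ span (v (i+1), ..., v j) }`
is a bounded affine permutation of average `r` and period `N`. -/
theorem cyclic_rank_function_is_bounded_affine (r N : ℕ) (hr : 0 < r) (hrN : r < N)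
    (v : ℤ → Fin r → ℂ)
    (hper : ∀ i : ℤ, v (i + N) = v i)
    (hrank : Submodule.span ℂ (Set.range v) = ⊤) :
    ∃ f : ℤ → ℤ,
      (∀ i : ℤ, IsLeast
        {j : ℤ | i ≤ j ∧ v i ∈ Submodule.span ℂ (v '' Set.Icc (i + 1) j)} (f i)) ∧
      Function.Bijective f ∧
      (∀ i : ℤ, f (i + N) = f i + N) ∧
      (∀ i : ℤ, i ≤ f i ∧ f i ≤ i + N) ∧
      ∑ i ∈ Finset.Icc (1 : ℤ) N, (f i - i) = r * N :=
  cyclic_rank_function_is_bounded_affine_general r N hrN v hper hrank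
end

section
/- Fix 0 < k < n and h ≥ 1. Let A be a (k+1) × ∞ matrix with columns v_j (j ∈ ℤ) that are standard basis vectors of ℂ^{k+1}, is hn-periodic in columns, has all rows nonzero, and is shift-by-n invariant up to row permutation. Let f = f_A where f_A(i) = min{j ≥ i : v_j = v_{i−1}}. Then the characteristic matrix of f ∘ s_+ (where s_+(i) = i+1) equals A up to row permutation; that is, the orbits of the group generated by f ∘ s_+ acting on ℤ are exactly the supports {j : v_j = e_ℓ} of the rows of A. -/
/-!
`g i` is the next point after `i` in the same fibre of `v`, so `g` preserves `v` and, going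
upwards from `x`, visits every point of the fibre of `v x` one after another. Hence the orbits of
`⟨g⟩` are exactly the fibres of `v`. Since the columns are standard basis vectors and no row of
`A` vanishes, the fibres of `v` are exactly the row supports `{j | v j = e ℓ}`.
-/

namespace Equiv.Perm

variable {α β : Type*} {f : Perm α} {v : α → β}

theorem SameCycle.apply_eq_of_forall_apply_eq (hv : ∀ x, v (f x) = v x) {x y : α}
    (h : f.SameCycle x y) : v x = v y := by
  obtain ⟨n, rfl⟩ := h
  induction n using Int.induction_on generalizing x with
  | zero => rfl
  | succ n ih => rw [zpow_add_one, mul_apply, ← ih, hv]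
  | pred n ih => rw [zpow_sub_one, mul_apply, ← ih, ← hv (f⁻¹ x), coe_inv, apply_symm_apply]

end Equiv.Perm

section NextInFibre

variable {β : Type*} {v : ℤ → β} {g : Equiv.Perm ℤ}

theorem sameCycle_of_le_of_isLeast (hg : ∀ i, IsLeast {j | i + 1 ≤ j ∧ v j = v i} (g i))
    {x y : ℤ} (hxy : x ≤ y) (hv : v y = v x) : g.SameCycle x y := by
  rcases hxy.eq_or_lt with rfl | hlt
  · exact .rfl
  · have hgy : g x ≤ y := (hg x).2 ⟨hlt, hv⟩
    have hgx : x < g x := (hg x).1.1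
    exact Equiv.Perm.sameCycle_apply_left.1
      (sameCycle_of_le_of_isLeast hg hgy (hv.trans (hg x).1.2.symm))
termination_by (y - x).toNat
decreasing_by omega

theorem sameCycle_iff_of_isLeast (hg : ∀ i, IsLeast {j | i + 1 ≤ j ∧ v j = v i} (g i))
    {x y : ℤ} : g.SameCycle x y ↔ v x = v y := by
  refine ⟨(·.apply_eq_of_forall_apply_eq fun i => (hg i).1.2), fun hv => ?_⟩
  rcases le_total x y with hxy | hyx
  · exact sameCycle_of_le_of_isLeast hg hxy hv.symm
  · exact (sameCycle_of_le_of_isLeast hg hyx hv).symm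

end NextInFibre

theorem Pi.eq_of_single_apply_ne_zero {ι M : Type*} [DecidableEq ι] [Zero M] {ℓ ℓ' : ι}
    {m : M} (h : (Pi.single ℓ' m : ι → M) ℓ ≠ 0) : ℓ = ℓ' :=
  by_contra fun hne => h (Pi.single_eq_of_ne (M := fun _ => M) hne m)

theorem characteristic_matrix_of_fA_general (k : ℕ)
    (v : ℤ → Fin (k + 1) → ℂ)
    (hstd : ∀ j : ℤ, ∃ ℓ : Fin (k + 1), v j = Pi.single ℓ 1)
    (hrows : ∀ ℓ : Fin (k + 1), ∃ j : ℤ, v j ℓ ≠ 0)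
    (g : Equiv.Perm ℤ)
    (hg : ∀ i : ℤ, IsLeast {j : ℤ | i + 1 ≤ j ∧ v j = v i} (g i)) :
    ∀ α : Set ℤ,
      (∃ x : ℤ, α = {y : ℤ | ∃ d : ℤ, (g ^ d) x = y}) ↔
      (∃ ℓ : Fin (k + 1), α = {j : ℤ | v j = Pi.single ℓ 1}) := by
  have horbit (x : ℤ) : {y : ℤ | ∃ d : ℤ, (g ^ d) x = y} = {j | v j = v x} :=
    Set.ext fun y => (sameCycle_iff_of_isLeast hg).trans eq_comm
  intro α
  simp only [horbit]
  constructor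
  · rintro ⟨x, rfl⟩
    obtain ⟨ℓ, hℓ⟩ := hstd x
    exact ⟨ℓ, by rw [hℓ]⟩
  · rintro ⟨ℓ, rfl⟩
    obtain ⟨j, hj⟩ := hrows ℓ
    obtain ⟨ℓ', hℓ'⟩ := hstd j
    rw [hℓ'] at hj
    exact ⟨j, by rw [hℓ', Pi.eq_of_single_apply_ne_zero hj]⟩

/-- For a valid column-periodic matrix `A` with columns `v` and
`g = f_A ∘ s_+` (so `g i = min {j ≥ i + 1 : v j = v i}`), the orbits of the cyclic group
generated by `g` acting on `ℤ` are exactly the supports `{j : v j = e ℓ}` of the rows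
of `A`; i.e., the characteristic matrix of `f_A ∘ s_+` equals `A` up to row permutation. -/
theorem characteristic_matrix_of_fA (k n h : ℕ) (hk : 0 < k) (hkn : k < n) (hh : 1 ≤ h)
    (v : ℤ → Fin (k + 1) → ℂ)
    (hper : ∀ j : ℤ, v (j + h * n) = v j)
    (hstd : ∀ j : ℤ, ∃ ℓ : Fin (k + 1), v j = Pi.single ℓ 1)
    (hrows : ∀ ℓ : Fin (k + 1), ∃ j : ℤ, v j ℓ ≠ 0)
    (hshift : ∃ σ : Equiv.Perm (Fin (k + 1)), ∀ (j : ℤ) (ℓ : Fin (k + 1)),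
      v (j + n) ℓ = v j (σ ℓ))
    (g : Equiv.Perm ℤ)
    (hg : ∀ i : ℤ, IsLeast {j : ℤ | i + 1 ≤ j ∧ v j = v i} (g i)) :
    ∀ α : Set ℤ,
      (∃ x : ℤ, α = {y : ℤ | ∃ d : ℤ, (g ^ d) x = y}) ↔
      (∃ ℓ : Fin (k + 1), α = {j : ℤ | v j = Pi.single ℓ 1}) :=
  characteristic_matrix_of_fA_general k v hstd hrows g hg
end

section
/- Fix 0 < k < n. Let f ∈ S̃_n^{k,++} (bijection with f(i+n)=f(i)+n, f(i)>i, ∑_{i=1}^n(f(i)−i)=kn) and let α ≠ β be two orbits of ⟨f⟩ on ℤ, with characteristic sequences w^α, w^β. Then for i ∈ α, the number of j ∈ β with i < j and f(j) < f(i) equals s_{i+2, f(i)−1}(w^β − w^α) when w^β_i − w^α_i = w^β_{f(i)} − w^α_{f(i)} = −1, where for a sequence u and i ≤ j, s_{ij}(u) = max(u_{i−1} + u_i + ... + u_j − 1, 0). -/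
open scoped Classical

/-!
Since `f` moves every integer up, on each of its cycles it is the successor map: `x < y` in one
cycle forces `f x ≤ y`. So `α` has no element strictly between `i` and `f i`, and the sum counts
the elements of `β` in `(i, f i)`. These are consecutive along `β`, hence `f` keeps all of them
but the largest below `f i`, and those are exactly the `j` being counted.
-/

open Finset

namespace Equiv.Perm

variable {f : Perm ℤ}

theorem le_pow_apply (hf : ∀ x, x < f x) (n : ℕ) (x : ℤ) : x ≤ (f ^ n) x := by
  rw [coe_pow]
  exact Function.id_le_iterate_of_id_le (fun y => (hf y).le) n x

theorem SameCycle.apply_le_of_lt (hf : ∀ x, x < f x) {x y : ℤ} (h : f.SameCycle x y)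
    (hxy : x < y) : f x ≤ y := by
  obtain ⟨d, rfl⟩ := h
  obtain ⟨n, rfl | rfl⟩ := Int.eq_nat_or_neg d
  · cases n with
    | zero => simp at hxy
    | succ m =>
      rw [zpow_natCast, pow_succ, mul_apply]
      exact le_pow_apply hf m (f x)
  · have : (f ^ n) ((f ^ (-(n : ℤ))) x) = x := by
      rw [← zpow_natCast, ← mul_apply, ← zpow_add, add_neg_cancel, zpow_zero, one_apply]
    have := le_pow_apply hf n ((f ^ (-(n : ℤ))) x)
    omega

theorem card_filter_sameCycle_apply_lt (hf : ∀ x, x < f x) (y₀ a b : ℤ) :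
    #{j ∈ Ioo a b | f.SameCycle y₀ j ∧ f j < b} =
      #{j ∈ Ioo a b | f.SameCycle y₀ j} - 1 := by
  rw [← filter_filter]
  set B := {j ∈ Ioo a b | f.SameCycle y₀ j}
  rcases B.eq_empty_or_nonempty with hB | hB
  · simp [hB]
  set c := B.max' hB
  have hcB : c ∈ B := B.max'_mem hB
  have hc : a < c ∧ c < b ∧ f.SameCycle y₀ c := by simpa [B, and_assoc] using hcB
  have hfc : b ≤ f c := by
    by_contra! hfc
    have hfcB : f c ∈ B := by
      simpa [B, hfc, sameCycle_apply_right, hc.2.2] using hc.1.trans (hf c)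
    exact (B.le_max' _ hfcB).not_gt (hf c)
  suffices {j ∈ B | f j < b} = B.erase c by rw [this, card_erase_of_mem hcB]
  ext j
  simp only [mem_filter, mem_erase]
  refine ⟨fun ⟨hjB, hfj⟩ => ⟨by rintro rfl; omega, hjB⟩, fun ⟨hjc, hjB⟩ => ⟨hjB, ?_⟩⟩
  have hj : f.SameCycle y₀ j := by simp_all [B]
  have hjc' : j < c := lt_of_le_of_ne (B.le_max' _ hjB) hjc
  have := (hj.symm.trans hc.2.2).apply_le_of_lt hf hjc'
  omega

end Equiv.Perm

open Equiv.Perm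

theorem orbit_inversion_count_general
    (f : Equiv.Perm ℤ)
    (hpos : ∀ i : ℤ, i < f i)
    (α β : Set ℤ)
    (hα : ∃ x : ℤ, α = {y : ℤ | ∃ d : ℤ, (f ^ d) x = y})
    (hβ : ∃ x : ℤ, β = {y : ℤ | ∃ d : ℤ, (f ^ d) x = y})
    (wα wβ : ℤ → ℤ)
    (hwα : ∀ m : ℤ, wα m = if m ∈ α then 1 else 0)
    (hwβ : ∀ m : ℤ, wβ m = if m ∈ β then 1 else 0)
    (i : ℤ) (hi : i ∈ α) :
    (Nat.card {j : ℤ | j ∈ β ∧ i < j ∧ f j < f i} : ℤ) =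
      max (∑ m ∈ Finset.Icc (i + 1) (f i - 1), (wβ m - wα m) - 1) 0 := by
  obtain ⟨x₀, rfl⟩ := hα
  obtain ⟨y₀, rfl⟩ := hβ
  have hgap : ∀ m ∈ Ioo i (f i), wα m = 0 := by
    intro m hm
    obtain ⟨him, hmi⟩ := mem_Ioo.mp hm
    rw [hwα, if_neg]
    intro hxm
    exact hmi.not_ge ((SameCycle.symm hi).trans hxm |>.apply_le_of_lt hpos him)
  have hsum : ∑ m ∈ Icc (i + 1) (f i - 1), (wβ m - wα m) =
      #{m ∈ Ioo i (f i) | f.SameCycle y₀ m} := by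
    rw [Icc_add_one_sub_one_eq_Ioo, natCast_card_filter]
    refine sum_congr rfl fun m hm => ?_
    rw [hgap m hm, hwβ, sub_zero]
    rfl
  have hset : {j : ℤ | j ∈ {y | ∃ d : ℤ, (f ^ d) y₀ = y} ∧ i < j ∧ f j < f i} =
      ↑{j ∈ Ioo i (f i) | f.SameCycle y₀ j ∧ f j < f i} := by
    ext j
    have := hpos j
    simp only [Set.mem_ofPred_eq, coe_filter, mem_Ioo]
    exact ⟨fun ⟨h, hij, hfj⟩ => ⟨⟨hij, by omega⟩, h, hfj⟩,
      fun ⟨⟨hij, _⟩, h, hfj⟩ => ⟨h, hij, hfj⟩⟩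
  rw [hset, Nat.card_coe_set_eq, Set.ncard_coe_finset, card_filter_sameCycle_apply_lt hpos, hsum]
  -- the truncated subtraction `#_ - 1` in `ℕ` is the `max _ 0`
  omega

/-- For `f ∈ S̃_n^{k,++}`, distinct orbits `α ≠ β` of `⟨f⟩` with
characteristic sequences `wα, wβ`, and `i ∈ α` with
`wβ i - wα i = wβ (f i) - wα (f i) = -1`, the number of `j ∈ β` with `i < j` and
`f j < f i` equals `s_{i+2, f(i)-1} (wβ - wα)`. -/
theorem orbit_inversion_count (n k : ℤ) (hk : 0 < k) (hkn : k < n)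
    (f : Equiv.Perm ℤ)
    (hper : ∀ i : ℤ, f (i + n) = f i + n)
    (hpos : ∀ i : ℤ, i < f i)
    (hsum : ∑ i ∈ Finset.Icc (1 : ℤ) n, (f i - i) = k * n)
    (α β : Set ℤ)
    (hα : ∃ x : ℤ, α = {y : ℤ | ∃ d : ℤ, (f ^ d) x = y})
    (hβ : ∃ x : ℤ, β = {y : ℤ | ∃ d : ℤ, (f ^ d) x = y})
    (hne : α ≠ β)
    (wα wβ : ℤ → ℤ)
    (hwα : ∀ m : ℤ, wα m = if m ∈ α then 1 else 0)
    (hwβ : ∀ m : ℤ, wβ m = if m ∈ β then 1 else 0)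
    (i : ℤ) (hi : i ∈ α)
    (hcond : wβ i - wα i = -1 ∧ wβ (f i) - wα (f i) = -1) :
    (Nat.card {j : ℤ | j ∈ β ∧ i < j ∧ f j < f i} : ℤ) =
      max (∑ m ∈ Finset.Icc (i + 1) (f i - 1), (wβ m - wα m) - 1) 0 :=
  orbit_inversion_count_general f hpos α β hα hβ wα wβ hwα hwβ i hi
end
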